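/- Chains in a relational join poset: let P and Q be posets and R* ⊆ P × Q a downward-closed relation. A nonempty finite subset S of the disjoint union P ⊔ Q is a chain (i.e. totally ordered subset) of the relational join poset P ⋆_{R*} Q^op if and only if S ∩ P is a chain of P, S ∩ Q is a chain of Q, and, whenever both S ∩ P and S ∩ Q are nonempty, the greatest element of the chain S ∩ P (in P) and the greatest element of the chain S ∩ Q (in Q) are related by R*. -/

import Mathlib

/-- The underlying type of the relational join poset `P ⋆_{R*} Qᵒᵖ` of a downward-closed
relation `r : P → Q → Prop`: the disjoint union of `P` and `Q`. -/
def RelJoin (P Q : Type) [PartialOrder P] [PartialOrder Q] (r : P → Q → Prop)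
    (_hr : ∀ ⦃p p' q q'⦄, r p q → p' ≤ p → q' ≤ q → r p' q') : Type :=
  P ⊕ Q

namespace RelJoin

variable {P Q : Type} [PartialOrder P] [PartialOrder Q]
variable {r : P → Q → Prop} {hr : ∀ ⦃p p' q q'⦄, r p q → p' ≤ p → q' ≤ q → r p' q'}

/-- The inclusion of `P` into the relational join poset. -/
def inl (p : P) : RelJoin P Q r hr := Sum.inl p

/-- The inclusion of `Q` into the relational join poset. -/
def inr (q : Q) : RelJoin P Q r hr := Sum.inr q

/-- The order of the relational join poset: elements of `P` are compared as in `P`,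
elements of `Q` are compared by the opposite of the order of `Q`, `p ≤ q` holds iff
`r p q`, and `q ≤ p` never holds. -/
protected def le : RelJoin P Q r hr → RelJoin P Q r hr → Prop
  | Sum.inl p, Sum.inl p' => p ≤ p'
  | Sum.inr q, Sum.inr q' => q' ≤ q
  | Sum.inl p, Sum.inr q => r p q
  | Sum.inr _, Sum.inl _ => False

instance : PartialOrder (RelJoin P Q r hr) where
  le := RelJoin.le
  le_refl x := by cases x <;> simp [RelJoin.le]
  le_trans x y z hxy hyz := by
    cases x <;> cases y <;> cases z <;>
      simp only [RelJoin.le] at * <;>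
      first
        | exact le_trans hxy hyz
        | exact le_trans hyz hxy
        | exact hr hyz hxy le_rfl
        | exact hr hxy le_rfl hyz
  le_antisymm x y hxy hyx := by
    cases x <;> cases y
    · exact congrArg Sum.inl (le_antisymm hxy hyx)
    · exact (hyx : False).elim
    · exact (hxy : False).elim
    · exact congrArg Sum.inr (le_antisymm hyx hxy)

end RelJoin

theorem chain_finite_exists_greatest {α : Type} [PartialOrder α] {s : Set α}
    (hc : IsChain (· ≤ ·) s) (hfin : s.Finite) (hne : s.Nonempty) :
    ∃ a, IsGreatest s a := by
  obtain ⟨a, ha, hmax⟩ := hfin.exists_maximal hne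
  refine ⟨a, ha, fun b hb => ?_⟩
  rcases eq_or_ne b a with h | h
  · exact h.le
  · rcases hc hb ha h with h' | h'
    · exact h'
    · exact hmax hb h'

/-- **Chains in a relational join poset.**  A nonempty finite subset `S` of `P ⊔ Q` is a
chain of the relational join poset `P ⋆_{R*} Qᵒᵖ` iff `S ∩ P` is a chain of `P`, `S ∩ Q`
is a chain of `Q`, and, whenever both are nonempty, the greatest element of the chain
`S ∩ P` (in `P`) and the greatest element of the chain `S ∩ Q` (in `Q`) are related
by `R*`. -/
theorem relJoin_isChain_iff {P Q : Type} [PartialOrder P] [PartialOrder Q]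
    (r : P → Q → Prop) (hr : ∀ ⦃p p' q q'⦄, r p q → p' ≤ p → q' ≤ q → r p' q')
    (S : Set (RelJoin P Q r hr)) (hfin : S.Finite) (hne : S.Nonempty) :
    IsChain (· ≤ ·) S ↔
      IsChain (· ≤ ·) {p : P | RelJoin.inl (r := r) (hr := hr) p ∈ S} ∧
      IsChain (· ≤ ·) {q : Q | RelJoin.inr (r := r) (hr := hr) q ∈ S} ∧
      (∀ _ : {p : P | RelJoin.inl (r := r) (hr := hr) p ∈ S}.Nonempty,
       ∀ _ : {q : Q | RelJoin.inr (r := r) (hr := hr) q ∈ S}.Nonempty,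
        ∃ (p : P) (q : Q),
          IsGreatest {p : P | RelJoin.inl (r := r) (hr := hr) p ∈ S} p ∧
          IsGreatest {q : Q | RelJoin.inr (r := r) (hr := hr) q ∈ S} q ∧ r p q) := by
  constructor
  · intro hS
    have hP : IsChain (· ≤ ·) {p : P | RelJoin.inl (r := r) (hr := hr) p ∈ S} := by
      intro p hp p' hp' hne'
      have : Sum.inl p ≠ (Sum.inl p' : P ⊕ Q) := fun h => hne' (Sum.inl.inj h)
      rcases hS hp hp' this with h | h
      · exact Or.inl h
      · exact Or.inr h
    have hQ : IsChain (· ≤ ·) {q : Q | RelJoin.inr (r := r) (hr := hr) q ∈ S} := by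
      intro q hq q' hq' hne'
      have : Sum.inr q ≠ (Sum.inr q' : P ⊕ Q) := fun h => hne' (Sum.inr.inj h)
      rcases hS hq hq' this with h | h
      · exact Or.inr h
      · exact Or.inl h
    refine ⟨hP, hQ, fun hPne hQne => ?_⟩
    have hPfin : {p : P | RelJoin.inl (r := r) (hr := hr) p ∈ S}.Finite :=
      hfin.preimage (Set.injOn_of_injective (fun a b => Sum.inl.inj))
    have hQfin : {q : Q | RelJoin.inr (r := r) (hr := hr) q ∈ S}.Finite :=
      hfin.preimage (Set.injOn_of_injective (fun a b => Sum.inr.inj))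
    obtain ⟨p0, hp0⟩ := chain_finite_exists_greatest hP hPfin hPne
    obtain ⟨q0, hq0⟩ := chain_finite_exists_greatest hQ hQfin hQne
    refine ⟨p0, q0, hp0, hq0, ?_⟩
    have hneq : RelJoin.inl (r := r) (hr := hr) p0 ≠ RelJoin.inr q0 := fun h =>
      Sum.inl_ne_inr (h : (Sum.inl p0 : P ⊕ Q) = Sum.inr q0)
    rcases hS hp0.1 hq0.1 hneq with h | h
    · exact h
    · exact (h : False).elim
  · rintro ⟨hP, hQ, hrel⟩ x hx y hy hxy
    cases x with
    | inl p =>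
      cases y with
      | inl p' =>
        have : p ≠ p' := fun h => hxy (congrArg Sum.inl h)
        rcases hP hx hy this with h | h
        · exact Or.inl h
        · exact Or.inr h
      | inr q =>
        obtain ⟨p0, q0, hp0, hq0, hr0⟩ := hrel ⟨p, hx⟩ ⟨q, hy⟩
        exact Or.inl (hr hr0 (hp0.2 hx) (hq0.2 hy))
    | inr q =>
      cases y with
      | inl p =>
        obtain ⟨p0, q0, hp0, hq0, hr0⟩ := hrel ⟨p, hy⟩ ⟨q, hx⟩
        exact Or.inr (hr hr0 (hp0.2 hy) (hq0.2 hx))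
      | inr q' =>
        have : q ≠ q' := fun h => hxy (congrArg Sum.inr h)
        rcases hQ hx hy this with h | h
        · exact Or.inr h
        · exact Or.inl h
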